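/- arXiv:1812.02573 — 2 statements merged into one kernel-verified Lean document; each statement's English description precedes it below -/
import Mathlib

section
/- Let p ∈ [0,1], let (Z_i)_{i∈ℕ} be an i.i.d. sequence of Bernoulli(p) random variables on a probability space Ω, let μ̂_n = (1/n)∑_{i=1}^n Z_i, and let J be a stopping time with values in ℕ ∪ {∞} with respect to the filtration generated by the samples such that Pr[J < ∞] = 1. Then for every δ > 0, Pr[|μ̂_J − p| ≤ ε(δ, J)] ≥ 1 − δ, where ε(δ,n) = sqrt(((3/5)·log(log_{11/10}(n) + 1) + (5/9)·log(24/δ))/n). -/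
/-
A bound that holds simultaneously for all times holds at any random time, so it suffices to bound
the probability that some centred sum `S n = ∑_{i=1}^n (Z i - p)` leaves `± n ε(δ, n)`.
Each `Z i - p` is `1/4`-sub-Gaussian (Hoeffding's lemma), so `exp (t S n)` is a nonnegative
submartingale, and Doob's maximal inequality yields `P(max_{n ≤ N} S n ≥ b) ≤ exp (-2 b² / N)`.
Peeling time into the geometric blocks `[(11/10)^k, (11/10)^(k+1))` and using, on block `k`, the
boundary value at its left end costs `δ/24 · (k+1)^(-12/11)`; these sum to at most `δ/2` per tail.
-/

open MeasureTheory ProbabilityTheory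

/-- The adaptive confidence radius
`ε(δ,n) = sqrt(((3/5)·log(log_{11/10}(n) + 1) + (5/9)·log(24/δ))/n)`. -/
noncomputable def eps (δ : ℝ) (n : ℕ) : ℝ :=
  Real.sqrt (((3 / 5) * Real.log (Real.log n / Real.log (11 / 10) + 1)
      + (5 / 9) * Real.log (24 / δ)) / n)

/-- The empirical mean `μ̂_n = (1/n) ∑_{i=1}^n Z_i`. -/
noncomputable def muhat {Ω : Type*} (Z : ℕ → Ω → ℝ) (n : ℕ) (ω : Ω) : ℝ :=
  (1 / n : ℝ) * ∑ i ∈ Finset.Icc 1 n, Z i ω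

open Real Finset
open scoped NNReal ENNReal

theorem sum_range_rpow_neg_le {s : ℝ} (hs : 1 < s) (K : ℕ) :
    ∑ k ∈ range K, ((k : ℝ) + 1) ^ (-s) ≤ s / (s - 1) := by
  cases K with
  | zero => rw [sum_range_zero]; positivity
  | succ K =>
    have hanti : AntitoneOn (fun x : ℝ => x ^ (-s)) (Set.Icc 1 (1 + K)) := fun x hx y _ hxy =>
      rpow_le_rpow_of_nonpos (by linarith [hx.1]) hxy (by linarith)
    have htail := hanti.sum_le_integral
    rw [integral_rpow (Or.inr ⟨by linarith, by simp [Set.uIcc_of_le]⟩)] at htail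
    have hpow : 0 ≤ (1 + (K : ℝ)) ^ (-s + 1) := by positivity
    rw [sum_range_succ']
    simp only [Nat.cast_add, Nat.cast_one, CharP.cast_eq_zero, zero_add, one_rpow] at htail ⊢
    have hflip : ((1 + (K : ℝ)) ^ (-s + 1) - 1) / (-s + 1)
        = (1 - (1 + (K : ℝ)) ^ (-s + 1)) / (s - 1) := by
      rw [← neg_div_neg_eq]; ring_nf
    calc _ ≤ ((1 + (K : ℝ)) ^ (-s + 1) - 1) / (-s + 1) + 1 := by
          gcongr
          exact (sum_congr rfl fun i _ => by rw [add_comm 1]).trans_le htail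
      _ ≤ 1 / (s - 1) + 1 := by
          rw [hflip]
          gcongr
          linarith
      _ = s / (s - 1) := by
          have : s - 1 ≠ 0 := by linarith
          field_simp
          ring

theorem pow_natFloor_logb_le {a x : ℝ} (ha : 1 < a) (hx : 1 ≤ x) :
    a ^ ⌊logb a x⌋₊ ≤ x := by
  calc a ^ ⌊logb a x⌋₊ = a ^ (⌊logb a x⌋₊ : ℝ) := (rpow_natCast a _).symm
    _ ≤ a ^ logb a x := rpow_le_rpow_of_exponent_le ha.le (Nat.floor_le (logb_nonneg ha hx))
    _ = x := rpow_logb (by linarith) ha.ne' (by linarith)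

theorem lt_pow_natFloor_logb_add_one {a x : ℝ} (ha : 1 < a) (hx : 0 < x) :
    x < a ^ (⌊logb a x⌋₊ + 1) := by
  calc x = a ^ logb a x := (rpow_logb (by linarith) ha.ne' hx).symm
    _ < a ^ ((⌊logb a x⌋₊ + 1 : ℕ) : ℝ) := by
        apply rpow_lt_rpow_of_exponent_lt ha
        push_cast
        exact Nat.lt_floor_add_one _
    _ = a ^ (⌊logb a x⌋₊ + 1) := rpow_natCast a _

theorem natCast_mul_eps (δ : ℝ) (n : ℕ) :
    n * eps δ n = √(n * ((3 / 5) * log (logb (11 / 10) n + 1) + (5 / 9) * log (24 / δ))) := by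
  set A := (3 / 5) * log (logb (11 / 10) n + 1) + (5 / 9) * log (24 / δ)
  calc n * eps δ n = √((n : ℝ) ^ 2) * √(A / n) := by rw [sqrt_sq (Nat.cast_nonneg n)]; rfl
    _ = √(n * A) := by
        rw [← sqrt_mul (sq_nonneg _)]
        rcases eq_or_ne (n : ℝ) 0 with hn | hn
        · simp [hn]
        · congr 1
          field_simp

/-- `(11/10)^k * peelingLevel δ k` is `n² ε(δ, n)²` at `n = (11/10)^k`, the left end of
block `k`. -/
noncomputable def peelingLevel (δ : ℝ) (k : ℕ) : ℝ :=
  (3 / 5) * log (k + 1) + (5 / 9) * log (24 / δ)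

theorem peelingLevel_nonneg {δ : ℝ} (hδ : 0 < δ) (hδ24 : δ ≤ 24) (k : ℕ) :
    0 ≤ peelingLevel δ k := by
  have := log_nonneg ((one_le_div hδ).2 hδ24)
  have := log_nonneg (le_add_of_nonneg_left (Nat.cast_nonneg k) : (1 : ℝ) ≤ k + 1)
  unfold peelingLevel
  positivity

theorem exp_neg_peelingLevel_le {δ : ℝ} (hδ : 0 < δ) (hδ24 : δ ≤ 24) (k : ℕ) :
    exp (-((20 / 11) * peelingLevel δ k)) ≤ δ / 24 * ((k : ℝ) + 1) ^ (-(12 / 11 : ℝ)) := by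
  have hlog : 0 ≤ log (24 / δ) := log_nonneg ((one_le_div hδ).2 hδ24)
  calc exp (-((20 / 11) * peelingLevel δ k))
      ≤ exp (-log (24 / δ) + (-(12 / 11)) * log (k + 1)) :=
        exp_le_exp.2 (by unfold peelingLevel; nlinarith)
    _ = δ / 24 * ((k : ℝ) + 1) ^ (-(12 / 11 : ℝ)) := by
        rw [exp_add, exp_neg, exp_log (by positivity), inv_div, mul_comm _ (log _),
          ← rpow_def_of_pos (by positivity)]

theorem sqrt_pow_mul_peelingLevel_le_natCast_mul_eps {δ : ℝ} (hδ : 0 < δ) (hδ24 : δ ≤ 24)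
    {m : ℕ} (hm : 1 ≤ m) :
    √((11 / 10) ^ ⌊logb (11 / 10) m⌋₊ * peelingLevel δ ⌊logb (11 / 10) m⌋₊) ≤ m * eps δ m := by
  have hm' : (1 : ℝ) ≤ m := by exact_mod_cast hm
  rw [natCast_mul_eps]
  refine sqrt_le_sqrt (mul_le_mul (pow_natFloor_logb_le (by norm_num) hm') ?_
    (peelingLevel_nonneg hδ hδ24 _) (by linarith))
  unfold peelingLevel
  gcongr
  exact Nat.floor_le (logb_nonneg (by norm_num) hm')

namespace ProbabilityTheory.HasSubgaussianMGF

variable {Ω : Type*} [MeasurableSpace Ω] {μ : Measure Ω} [IsProbabilityMeasure μ]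
  {X : Ω → ℝ} {c : ℝ≥0}

lemma integral_eq_zero (h : HasSubgaussianMGF X c μ) : μ[X] = 0 := by
  have h0 : (0 : ℝ) ∈ interior (integrableExpSet X μ) := by
    simp [h.integrableExpSet_eq_univ]
  have hgauss : HasDerivAt (fun t : ℝ => exp (c * t ^ 2 / 2)) 0 0 := by
    simpa using ((hasDerivAt_pow 2 (0 : ℝ)).const_mul (c : ℝ)).div_const 2 |>.exp
  have hmax : IsLocalMax (fun t => mgf X μ t - exp (c * t ^ 2 / 2)) 0 :=
    Filter.Eventually.of_forall fun t => by simpa using h.mgf_le t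
  have := hmax.hasDerivAt_eq_zero ((hasDerivAt_mgf h0).sub hgauss)
  simpa using this

lemma one_le_mgf (h : HasSubgaussianMGF X c μ) (t : ℝ) : 1 ≤ mgf X μ t := by
  calc (1 : ℝ) = ∫ ω, (t * X ω + 1) ∂μ := by
        rw [integral_add (h.integrable.const_mul t) (integrable_const 1), integral_const_mul,
          h.integral_eq_zero]
        simp
    _ ≤ mgf X μ t :=
        integral_mono ((h.integrable.const_mul t).add (integrable_const 1))
          (h.integrable_exp_mul t) fun ω => add_one_le_exp _

end ProbabilityTheory.HasSubgaussianMGF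

section

variable {Ω : Type*} [MeasurableSpace Ω] {μ : Measure Ω}

theorem integral_eq_of_forall_eq_zero_or_eq_one {Y : Ω → ℝ} (hY : Measurable Y)
    (hval : ∀ ω, Y ω = 0 ∨ Y ω = 1) {p : ℝ} (hp : 0 ≤ p)
    (hprob : μ {ω | Y ω = 1} = ENNReal.ofReal p) : μ[Y] = p := by
  have hind : Y = {ω | Y ω = 1}.indicator 1 := by
    ext ω
    rcases hval ω with h | h <;> simp [Set.indicator, h]
  have hmeasSet : MeasurableSet {ω | Y ω = 1} := hY (measurableSet_singleton 1)
  rw [hind, integral_indicator_one hmeasSet, measureReal_def, hprob,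
    ENNReal.toReal_ofReal hp]

variable [IsProbabilityMeasure μ]

theorem hasSubgaussianMGF_sub_of_forall_eq_zero_or_eq_one {Y : Ω → ℝ} (hY : Measurable Y)
    (hval : ∀ ω, Y ω = 0 ∨ Y ω = 1) {p : ℝ} (hp : 0 ≤ p)
    (hprob : μ {ω | Y ω = 1} = ENNReal.ofReal p) :
    HasSubgaussianMGF (fun ω => Y ω - p) (1 / 4) μ := by
  have hoeffding := hasSubgaussianMGF_of_mem_Icc (μ := μ) (a := 0) (b := 1) hY.aemeasurable
    (ae_of_all _ fun ω => by rcases hval ω with h | h <;> simp [h])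
  rw [integral_eq_of_forall_eq_zero_or_eq_one hY hval hp hprob] at hoeffding
  convert hoeffding using 1
  ext
  norm_num

theorem submartingale_prod_range_succ {W : ℕ → Ω → ℝ} (hmeas : ∀ i, Measurable (W i))
    (hindep : iIndepFun W μ) (hnonneg : ∀ i, 0 ≤ W i) (hint : ∀ i, Integrable (W i) μ)
    (hone : ∀ i, 1 ≤ μ[W i]) :
    Submartingale (fun n => ∏ i ∈ range (n + 1), W i)
      (Filtration.natural W fun i => (hmeas i).stronglyMeasurable) μ := by
  set ℱ := Filtration.natural W fun i => (hmeas i).stronglyMeasurable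
  have hstep : ∀ n, ∏ i ∈ range (n + 1 + 1), W i = (∏ i ∈ range (n + 1), W i) * W (n + 1) :=
    fun n => prod_range_succ W (n + 1)
  have hadapted : StronglyAdapted ℱ fun n => ∏ i ∈ range (n + 1), W i := fun n =>
    Finset.stronglyMeasurable_prod _ fun i hi =>
      (Filtration.stronglyAdapted_natural _ i).mono (ℱ.mono (by simpa [Nat.lt_succ_iff] using hi))
  have hintegrable : ∀ n, Integrable (∏ i ∈ range (n + 1), W i) μ := by
    intro n
    induction n with
    | zero => simpa using hint 0
    | succ n ih =>
      rw [hstep]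
      exact (hindep.indepFun_prod_range_succ hmeas (n + 1)).integrable_mul ih (hint (n + 1))
  refine submartingale_nat hadapted hintegrable fun n => ?_
  have hpull := condExp_mul_of_stronglyMeasurable_left (m := ℱ n) (hadapted n)
    (by rw [← hstep]; exact hintegrable (n + 1)) (hint (n + 1))
  have hindepNext := hindep.condExp_natural_ae_eq_of_lt
    (fun i => (hmeas i).stronglyMeasurable) (Nat.lt_succ_self n)
  filter_upwards [hpull, hindepNext] with ω hpullω hnextω
  rw [hstep, hpullω, Pi.mul_apply, hnextω, prod_apply]
  exact le_mul_of_one_le_right (prod_nonneg fun i _ => hnonneg i ω) (hone (n + 1))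

theorem measure_exists_le_sum_range_succ_le_exp {X : ℕ → Ω → ℝ} {c : ℝ≥0}
    (hmeas : ∀ i, Measurable (X i)) (hindep : iIndepFun X μ)
    (hsub : ∀ i, HasSubgaussianMGF (X i) c μ) (N : ℕ) (b : ℝ) {t : ℝ} (ht : 0 ≤ t) :
    μ {ω | ∃ n ≤ N, b ≤ ∑ i ∈ range (n + 1), X i ω}
      ≤ ENNReal.ofReal (exp (c * (N + 1) * t ^ 2 / 2 - t * b)) := by
  set W : ℕ → Ω → ℝ := fun i ω => exp (t * X i ω)
  have hWmeas : ∀ i, Measurable (W i) := fun i => ((hmeas i).const_mul t).exp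
  have hWnonneg : ∀ i, 0 ≤ W i := fun i ω => (exp_pos _).le
  have hprod : ∀ n ω, (∏ i ∈ range (n + 1), W i) ω = exp (t * ∑ i ∈ range (n + 1), X i ω) := by
    intro n ω
    rw [prod_apply, mul_sum, exp_sum]
  have hprod_nonneg : ∀ n, 0 ≤ ∏ i ∈ range (n + 1), W i := fun n ω => by
    rw [hprod]
    exact (exp_pos _).le
  have hsubm := submartingale_prod_range_succ hWmeas
    (hindep.comp _ fun _ => (measurable_id.const_mul t).exp) hWnonneg
    (fun i => (hsub i).integrable_exp_mul t) fun i => (hsub i).one_le_mgf t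
  set ε : ℝ≥0 := (exp (t * b)).toNNReal
  have hε : (ε : ℝ) = exp (t * b) := Real.coe_toNNReal _ (exp_pos _).le
  have hsubset : {ω | ∃ n ≤ N, b ≤ ∑ i ∈ range (n + 1), X i ω} ⊆ {ω | (ε : ℝ) ≤
      (range (N + 1)).sup' nonempty_range_add_one fun k => (∏ i ∈ range (k + 1), W i) ω} := by
    rintro ω ⟨n, hn, hbn⟩
    refine le_trans ?_ (le_sup' (fun k => (∏ i ∈ range (k + 1), W i) ω)
      (mem_range.2 (Nat.lt_succ_of_le hn)))
    rw [hε, hprod]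
    exact exp_le_exp.2 (mul_le_mul_of_nonneg_left hbn ht)
  have hmgf : ∫ ω, (∏ i ∈ range (N + 1), W i) ω ∂μ ≤ exp (c * (N + 1) * t ^ 2 / 2) := by
    have hsum := HasSubgaussianMGF.sum_of_iIndepFun hindep (s := range (N + 1))
      fun i _ => hsub i
    simp only [sum_const, card_range, nsmul_eq_mul] at hsum
    simp_rw [hprod]
    simpa [mgf, mul_comm (c : ℝ)] using hsum.mgf_le t
  have hmax : ε * μ {ω | ∃ n ≤ N, b ≤ ∑ i ∈ range (n + 1), X i ω}
      ≤ ENNReal.ofReal (exp (c * (N + 1) * t ^ 2 / 2)) :=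
    calc _ ≤ ε * μ _ := mul_le_mul_right (measure_mono hsubset) _
      _ ≤ _ := maximal_ineq hsubm hprod_nonneg N
      _ ≤ ENNReal.ofReal (∫ ω, (∏ i ∈ range (N + 1), W i) ω ∂μ) :=
          ENNReal.ofReal_le_ofReal (setIntegral_le_integral (hsubm.integrable N)
            (ae_of_all _ fun ω => hprod_nonneg N ω))
      _ ≤ _ := ENNReal.ofReal_le_ofReal hmgf
  rw [exp_sub, ENNReal.ofReal_div_of_pos (exp_pos _), ENNReal.le_div_iff_mul_le
    (Or.inl (by simp [exp_pos])) (Or.inl ENNReal.ofReal_ne_top), mul_comm]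
  exact hmax

theorem measure_exists_le_sum_range_succ_le {X : ℕ → Ω → ℝ} {c : ℝ≥0}
    (hmeas : ∀ i, Measurable (X i)) (hindep : iIndepFun X μ)
    (hsub : ∀ i, HasSubgaussianMGF (X i) c μ) (N : ℕ) {b : ℝ} (hb : 0 ≤ b) :
    μ {ω | ∃ n ≤ N, b ≤ ∑ i ∈ range (n + 1), X i ω}
      ≤ ENNReal.ofReal (exp (-(b ^ 2 / (2 * c * (N + 1))))) := by
  convert measure_exists_le_sum_range_succ_le_exp hmeas hindep hsub N b
    (t := b / (c * (N + 1))) (by positivity) using 4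
  rcases eq_or_ne (c : ℝ) 0 with hc | hc
  · simp [hc]
  · field_simp
    ring

theorem measure_exists_sqrt_pow_mul_peelingLevel_le_sum_le {X : ℕ → Ω → ℝ}
    (hmeas : ∀ i, Measurable (X i)) (hindep : iIndepFun X μ)
    (hsub : ∀ i, HasSubgaussianMGF (X i) (1 / 4) μ) {δ : ℝ} (hδ : 0 < δ) (hδ24 : δ ≤ 24)
    (k : ℕ) :
    μ {ω | ∃ n ≤ ⌊(11 / 10 : ℝ) ^ (k + 1)⌋₊ - 1,
        √((11 / 10) ^ k * peelingLevel δ k) ≤ ∑ i ∈ range (n + 1), X i ω}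
      ≤ ENNReal.ofReal (δ / 24 * ((k : ℝ) + 1) ^ (-(12 / 11 : ℝ))) := by
  set a : ℝ := 11 / 10
  set N := ⌊a ^ (k + 1)⌋₊ - 1
  have hN : (N : ℝ) + 1 ≤ a ^ (k + 1) := by
    have : 1 ≤ ⌊a ^ (k + 1)⌋₊ := Nat.le_floor (by simpa using one_le_pow₀ (by norm_num : 1 ≤ a))
    rw [← Nat.cast_add_one, Nat.sub_add_cancel this]
    exact Nat.floor_le (by positivity)
  have hg := peelingLevel_nonneg hδ hδ24 k
  refine (measure_exists_le_sum_range_succ_le hmeas hindep hsub N (sqrt_nonneg _)).trans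
    (ENNReal.ofReal_le_ofReal ((exp_le_exp.2 ?_).trans (exp_neg_peelingLevel_le hδ hδ24 k)))
  rw [neg_le_neg_iff, sq_sqrt (by positivity)]
  have ha : 0 < a := by norm_num
  calc (20 / 11) * peelingLevel δ k = 2 * (a ^ k * peelingLevel δ k) / a ^ (k + 1) := by
        rw [pow_succ]
        field_simp
        norm_num [a]
        ring
    _ ≤ 2 * (a ^ k * peelingLevel δ k) / ((N : ℝ) + 1) :=
        div_le_div_of_nonneg_left (by positivity) (by positivity) hN
    _ = a ^ k * peelingLevel δ k / (2 * ((1 / 4 : ℝ≥0) : ℝ) * ((N : ℝ) + 1)) := by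
        push_cast
        field_simp
        ring

theorem measure_exists_mul_eps_lt_sum_range_succ_le {X : ℕ → Ω → ℝ}
    (hmeas : ∀ i, Measurable (X i)) (hindep : iIndepFun X μ)
    (hsub : ∀ i, HasSubgaussianMGF (X i) (1 / 4) μ) {δ : ℝ} (hδ : 0 < δ) (hδ24 : δ ≤ 24) :
    μ {ω | ∃ n : ℕ, ((n + 1 : ℕ) : ℝ) * eps δ (n + 1) < ∑ i ∈ range (n + 1), X i ω}
      ≤ ENNReal.ofReal (δ / 2) := by
  set E : ℕ → Set Ω := fun k => {ω | ∃ n ≤ ⌊(11 / 10 : ℝ) ^ (k + 1)⌋₊ - 1,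
    √((11 / 10) ^ k * peelingLevel δ k) ≤ ∑ i ∈ range (n + 1), X i ω}
  have hcover : {ω | ∃ n : ℕ, ((n + 1 : ℕ) : ℝ) * eps δ (n + 1)
      < ∑ i ∈ range (n + 1), X i ω} ⊆ ⋃ k, E k := by
    rintro ω ⟨n, hn⟩
    refine Set.mem_iUnion.2 ⟨_, n, ?_,
      (sqrt_pow_mul_peelingLevel_le_natCast_mul_eps hδ hδ24 n.succ_pos).trans hn.le⟩
    have := Nat.le_floor (lt_pow_natFloor_logb_add_one (by norm_num : (1 : ℝ) < 11 / 10)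
      (Nat.cast_pos.2 n.succ_pos)).le
    omega
  calc _ ≤ μ (⋃ k, E k) := measure_mono hcover
    _ ≤ ∑' k, μ (E k) := measure_iUnion_le E
    _ ≤ ∑' k : ℕ, ENNReal.ofReal (δ / 24 * ((k : ℝ) + 1) ^ (-(12 / 11 : ℝ))) :=
        ENNReal.tsum_le_tsum fun k =>
          measure_exists_sqrt_pow_mul_peelingLevel_le_sum_le hmeas hindep hsub hδ hδ24 k
    _ ≤ ENNReal.ofReal (δ / 2) := by
        refine ENNReal.tsum_le_of_sum_range_le fun K => ?_
        rw [← ENNReal.ofReal_sum_of_nonneg fun k _ => by positivity, ← mul_sum]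
        refine ENNReal.ofReal_le_ofReal ?_
        have := sum_range_rpow_neg_le (by norm_num : (1 : ℝ) < 12 / 11) K
        norm_num at this
        nlinarith

theorem measure_exists_mul_eps_lt_abs_sum_range_succ_le {X : ℕ → Ω → ℝ}
    (hmeas : ∀ i, Measurable (X i)) (hindep : iIndepFun X μ)
    (hsub : ∀ i, HasSubgaussianMGF (X i) (1 / 4) μ) {δ : ℝ} (hδ : 0 < δ) (hδ24 : δ ≤ 24) :
    μ {ω | ∃ n : ℕ, ((n + 1 : ℕ) : ℝ) * eps δ (n + 1) < |∑ i ∈ range (n + 1), X i ω|}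
      ≤ ENNReal.ofReal δ := by
  have hupper := measure_exists_mul_eps_lt_sum_range_succ_le hmeas hindep hsub hδ hδ24
  have hlower := measure_exists_mul_eps_lt_sum_range_succ_le (X := fun i => -X i)
    (fun i => (hmeas i).neg) (hindep.comp _ fun _ => measurable_neg) (fun i => (hsub i).neg)
    hδ hδ24
  calc _ ≤ μ ({ω | ∃ n : ℕ, ((n + 1 : ℕ) : ℝ) * eps δ (n + 1) < ∑ i ∈ range (n + 1), X i ω} ∪
        {ω | ∃ n : ℕ, ((n + 1 : ℕ) : ℝ) * eps δ (n + 1) < ∑ i ∈ range (n + 1), -X i ω}) := by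
        refine measure_mono fun ω ⟨n, hn⟩ => ?_
        rcases lt_abs.1 hn with h | h
        · exact Or.inl ⟨n, h⟩
        · exact Or.inr ⟨n, by simpa [sum_neg_distrib] using h⟩
    _ ≤ ENNReal.ofReal (δ / 2) + ENNReal.ofReal (δ / 2) :=
        (measure_union_le _ _).trans (add_le_add hupper hlower)
    _ = ENNReal.ofReal δ := by rw [← ENNReal.ofReal_add (by positivity) (by positivity), add_halves]

end

theorem muhat_succ_sub {Ω : Type*} (Z : ℕ → Ω → ℝ) (p : ℝ) (n : ℕ) (ω : Ω) :
    muhat Z (n + 1) ω - p = (∑ i ∈ range (n + 1), (Z (i + 1) ω - p)) / (n + 1 : ℕ) := by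
  have hsum : ∑ i ∈ Icc 1 (n + 1), Z i ω = ∑ i ∈ range (n + 1), Z (i + 1) ω := by
    rw [← Finset.Ico_add_one_right_eq_Icc, sum_Ico_eq_sum_range]
    simp [add_comm]
  rw [muhat, hsum, sum_sub_distrib, sum_const, card_range, nsmul_eq_mul]
  field_simp

theorem adaptive_concentration_bernoulli_finite_general
    {Ω : Type*} [MeasurableSpace Ω] (μ : Measure Ω) [IsProbabilityMeasure μ]
    (p : ℝ) (hp : p ∈ Set.Icc (0 : ℝ) 1)
    (Z : ℕ → Ω → ℝ)
    (hmeas : ∀ i, Measurable (Z i))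
    (hindep : iIndepFun Z μ)
    (hval : ∀ i ω, Z i ω = 0 ∨ Z i ω = 1)
    (hbern : ∀ i, μ {ω | Z i ω = 1} = ENNReal.ofReal p)
    (J : Ω → ℕ∞)
    (hJ1 : ∀ ω, 1 ≤ J ω)
    (δ : ℝ) (hδ : 0 < δ) :
    1 - ENNReal.ofReal δ
      ≤ μ {ω | ∀ n : ℕ, J ω = (n : ℕ∞) → |muhat Z n ω - p| ≤ eps δ n} := by
  rcases le_or_gt δ 24 with hδ24 | hδ24
  swap
  · rw [tsub_eq_zero_of_le (ENNReal.one_le_ofReal.2 (by linarith))]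
    exact zero_le
  set X : ℕ → Ω → ℝ := fun i ω => Z (i + 1) ω - p
  set B := {ω | ∃ n : ℕ, ((n + 1 : ℕ) : ℝ) * eps δ (n + 1) < |∑ i ∈ range (n + 1), X i ω|}
  have hB : μ B ≤ ENNReal.ofReal δ :=
    measure_exists_mul_eps_lt_abs_sum_range_succ_le (fun i => (hmeas _).sub_const p)
      ((hindep.precomp (add_left_injective 1)).comp _ fun _ => measurable_sub_const p)
      (fun i => hasSubgaussianMGF_sub_of_forall_eq_zero_or_eq_one (hmeas _) (hval _) hp.1
        (hbern _)) hδ hδ24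
  have hgood : Bᶜ ⊆ {ω | ∀ n : ℕ, J ω = (n : ℕ∞) → |muhat Z n ω - p| ≤ eps δ n} := by
    intro ω hω n hJn
    obtain ⟨m, rfl⟩ := Nat.exists_eq_add_of_le' (by exact_mod_cast hJn ▸ hJ1 ω : 1 ≤ n)
    have hm := not_lt.1 fun h => hω ⟨m, h⟩
    rw [muhat_succ_sub, abs_div, Nat.abs_cast, div_le_iff₀ (by positivity), mul_comm]
    exact hm
  calc 1 - ENNReal.ofReal δ ≤ 1 - μ B := tsub_le_tsub_left hB 1
    _ ≤ μ Bᶜ := tsub_le_iff_right.2 (by simpa using measure_union_le (μ := μ) Bᶜ B)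
    _ ≤ _ := measure_mono hgood

/-- Adaptive concentration inequality for i.i.d. Bernoulli samples when the stopping
time is finite almost surely (Theorem `thm:bernoulliconcentration`). -/
theorem adaptive_concentration_bernoulli_finite
    {Ω : Type*} [MeasurableSpace Ω] (μ : Measure Ω) [IsProbabilityMeasure μ]
    (p : ℝ) (hp : p ∈ Set.Icc (0 : ℝ) 1)
    (Z : ℕ → Ω → ℝ)
    (hmeas : ∀ i, Measurable (Z i))
    (hindep : iIndepFun Z μ)
    (hval : ∀ i ω, Z i ω = 0 ∨ Z i ω = 1)
    (hbern : ∀ i, μ {ω | Z i ω = 1} = ENNReal.ofReal p)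
    (J : Ω → ℕ∞)
    (hJ1 : ∀ ω, 1 ≤ J ω)
    (hJstop : ∀ n : ℕ, MeasurableSet[MeasurableSpace.comap
        (fun ω (i : Fin n) => Z ((i : ℕ) + 1) ω) inferInstance] {ω | J ω = (n : ℕ∞)})
    (hJfin : μ {ω | J ω ≠ ⊤} = 1)
    (δ : ℝ) (hδ : 0 < δ) :
    1 - ENNReal.ofReal δ
      ≤ μ {ω | ∀ n : ℕ, J ω = (n : ℕ∞) → |muhat Z n ω - p| ≤ eps δ n} :=
  adaptive_concentration_bernoulli_finite_general μ p hp Z hmeas hindep hval hbern J hJ1 δ hδ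
end

section
/- Let p ∈ [0,1], let (Z_i)_{i∈ℕ} be an i.i.d. sequence of Bernoulli(p) random variables on a probability space Ω, let μ̂_n = (1/n)∑_{i=1}^n Z_i, let d ∈ ℝ with p ≠ d, and let Δ > 0. Define the stopping time J = inf{n ∈ ℕ, n ≥ 1 : |μ̂_n − d| ≥ ε(Δ, n)} (with J = ∞ if no such n exists). Then Pr[J < ∞] = 1. -/
open MeasureTheory ProbabilityTheory Classical

/-- The stopping time `J = inf {n ≥ 1 : |μ̂_n − d| ≥ ε(Δ, n)}` of the verification
algorithm for the atomic specification `μ_Z ≥ d` (with `J = ∞` if no such `n` exists). -/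
noncomputable def stopJ {Ω : Type*} (Z : ℕ → Ω → ℝ) (d Δ : ℝ) (ω : Ω) : ℕ∞ :=
  if ∃ n : ℕ, 1 ≤ n ∧ eps Δ n ≤ |muhat Z n ω - d|
  then ((sInf {n : ℕ | 1 ≤ n ∧ eps Δ n ≤ |muhat Z n ω - d|} : ℕ) : ℕ∞)
  else ⊤

/-!
By the strong law of large numbers the empirical means `muhat Z n` converge almost surely
to `p`, so `|muhat Z n - d|` tends to `|p - d| > 0`, while the confidence radius `eps Δ n`
tends to `0` (its numerator grows only like `log log n`). Hence along almost every sample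
path the stopping condition eventually holds.
-/

open Filter Topology

lemma tendsto_eps_atTop (Δ : ℝ) : Tendsto (eps Δ) atTop (𝓝 0) := by
  set L := Real.log (11 / 10)
  have hL : 0 < L := Real.log_pos (by norm_num)
  have hlog : Tendsto (fun n : ℕ => Real.log n / n) atTop (𝓝 0) :=
    Real.isLittleO_log_id_atTop.tendsto_div_nhds_zero.comp tendsto_natCast_atTop_atTop
  -- `0 ≤ log (x / L + 1) ≤ x / L` for `x = log n ≥ 0`
  have hloglog : Tendsto (fun n : ℕ => Real.log (Real.log n / L + 1) / n) atTop (𝓝 0) := by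
    refine squeeze_zero (fun n => ?_) (fun n => ?_) (by simpa using hlog.const_mul L⁻¹)
    · have : 0 ≤ Real.log n / L := div_nonneg (Real.log_natCast_nonneg n) hL.le
      exact div_nonneg (Real.log_nonneg (by linarith)) n.cast_nonneg
    · have : 0 ≤ Real.log n / L := div_nonneg (Real.log_natCast_nonneg n) hL.le
      calc Real.log (Real.log n / L + 1) / n ≤ (Real.log n / L) / n := by
            gcongr
            linarith [Real.log_le_sub_one_of_pos (by positivity : 0 < Real.log n / L + 1)]
        _ = L⁻¹ * (Real.log n / n) := by ring
  have hradicand : Tendsto (fun n : ℕ => ((3 / 5) * Real.log (Real.log n / L + 1)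
      + (5 / 9) * Real.log (24 / Δ)) / n) atTop (𝓝 0) := by
    simpa only [add_div, mul_div_assoc, mul_zero, add_zero] using (hloglog.const_mul (3 / 5)).add
      (tendsto_const_div_atTop_nhds_zero_nat ((5 / 9) * Real.log (24 / Δ)))
  have hsqrt := (Real.continuous_sqrt.tendsto 0).comp hradicand
  rw [Real.sqrt_zero] at hsqrt
  exact hsqrt

lemma stopJ_ne_top_of_tendsto_muhat {Ω : Type*} {Z : ℕ → Ω → ℝ} {d Δ q : ℝ} {ω : Ω}
    (hq : q ≠ d) (hlim : Tendsto (fun n => muhat Z n ω) atTop (𝓝 q)) :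
    stopJ Z d Δ ω ≠ ⊤ := by
  have hgap : ∀ᶠ n in atTop, eps Δ n < |muhat Z n ω - d| :=
    (tendsto_eps_atTop Δ).eventually_lt ((hlim.sub_const d).abs)
      (abs_pos.mpr (sub_ne_zero.mpr hq))
  obtain ⟨n, hn, hn1⟩ := (hgap.and (eventually_ge_atTop 1)).exists
  rw [stopJ, if_pos ⟨n, hn1, hn.le⟩]
  exact ENat.natCast_ne_top _

lemma muhat_eq_sum_range_div {Ω : Type*} (Z : ℕ → Ω → ℝ) (n : ℕ) (ω : Ω) :
    muhat Z n ω = (∑ i ∈ Finset.range n, Z (i + 1) ω) / n := by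
  rw [muhat, ← Finset.Ico_add_one_right_eq_Icc, Finset.sum_Ico_eq_sum_range]
  simp only [add_tsub_cancel_right, add_comm 1]
  ring

lemma ae_tendsto_muhat {Ω : Type*} [MeasurableSpace Ω] {μ : Measure Ω} {Z : ℕ → Ω → ℝ}
    (hint : Integrable (Z 1) μ) (hindep : Pairwise fun i j => IndepFun (Z i) (Z j) μ)
    (hident : ∀ i, IdentDistrib (Z (i + 1)) (Z 1) μ μ) :
    ∀ᵐ ω ∂μ, Tendsto (fun n => muhat Z n ω) atTop (𝓝 μ[Z 1]) := by
  have hslln := strong_law_ae_real (fun i => Z (i + 1)) hint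
    (fun i j hij => hindep (by omega)) hident
  simpa only [muhat_eq_sum_range_div] using hslln

lemma eq_indicator_one_of_forall_eq_zero_or_one {α : Type*} {X : α → ℝ}
    (hX : ∀ a, X a = 0 ∨ X a = 1) : X = {a | X a = 1}.indicator 1 := by
  funext a
  rcases hX a with h | h <;> simp [Set.indicator, h]

lemma indicator_one_eq_comp_decide {α : Type*} (S : Set α) :
    S.indicator (1 : α → ℝ) = (fun b : Bool => if b then 1 else 0) ∘ fun a => decide (a ∈ S) := by
  funext a
  by_cases ha : a ∈ S <;> simp [ha]

lemma preimage_decide_mem_singleton {α : Type*} (S : Set α) (b : Bool) :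
    (fun a => decide (a ∈ S)) ⁻¹' {b} = if b then S else Sᶜ := by
  cases b <;> ext <;> simp

lemma integral_eq_measureReal_of_forall_eq_zero_or_one {Ω : Type*} [MeasurableSpace Ω]
    {μ : Measure Ω} {X : Ω → ℝ} (hXm : Measurable X) (hX : ∀ ω, X ω = 0 ∨ X ω = 1) :
    μ[X] = μ.real {ω | X ω = 1} := by
  conv_lhs => rw [eq_indicator_one_of_forall_eq_zero_or_one hX]
  exact integral_indicator_one (hXm (measurableSet_singleton 1))

-- `E.indicator 1` factors through the Boolean `ω ∈ E`, whose law on `Bool` is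
-- determined by the mass of `true`.
lemma identDistrib_indicator_one {Ω Ω' : Type*} [MeasurableSpace Ω] [MeasurableSpace Ω']
    {E : Set Ω} {F : Set Ω'} {μ : Measure Ω} {ν : Measure Ω'}
    [IsProbabilityMeasure μ] [IsProbabilityMeasure ν]
    (hE : MeasurableSet E) (hF : MeasurableSet F) (h : μ E = ν F) :
    IdentDistrib (E.indicator (1 : Ω → ℝ)) (F.indicator 1) μ ν := by
  have hEb : Measurable fun ω => decide (ω ∈ E) :=
    measurable_to_bool (by simpa [preimage_decide_mem_singleton] using hE)
  have hFb : Measurable fun ω => decide (ω ∈ F) :=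
    measurable_to_bool (by simpa [preimage_decide_mem_singleton] using hF)
  rw [indicator_one_eq_comp_decide, indicator_one_eq_comp_decide]
  refine IdentDistrib.comp ⟨hEb.aemeasurable, hFb.aemeasurable, ?_⟩ (measurable_of_countable _)
  refine Measure.ext_of_singleton fun b => ?_
  rw [Measure.map_apply hEb (measurableSet_singleton b),
    Measure.map_apply hFb (measurableSet_singleton b), preimage_decide_mem_singleton,
    preimage_decide_mem_singleton]
  cases b
  · simp only [Bool.false_eq_true, if_false, prob_compl_eq_one_sub hE, prob_compl_eq_one_sub hF, h]
  · simpa only [if_true] using h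

theorem verify_terminates_general
    {Ω : Type*} [MeasurableSpace Ω] (μ : Measure Ω) [IsProbabilityMeasure μ]
    (p : ℝ) (hp : p ∈ Set.Icc (0 : ℝ) 1)
    (Z : ℕ → Ω → ℝ)
    (hmeas : ∀ i, Measurable (Z i))
    (hindep : iIndepFun Z μ)
    (hval : ∀ i ω, Z i ω = 0 ∨ Z i ω = 1)
    (hbern : ∀ i, μ {ω | Z i ω = 1} = ENNReal.ofReal p)
    (d : ℝ) (hpd : p ≠ d) (Δ : ℝ) :
    μ {ω | stopJ Z d Δ ω ≠ ⊤} = 1 := by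
  have hint : Integrable (Z 1) μ := by
    rw [eq_indicator_one_of_forall_eq_zero_or_one (hval 1)]
    exact (integrable_const 1).indicator (hmeas 1 (measurableSet_singleton 1))
  have hmean : μ[Z 1] = p := by
    rw [integral_eq_measureReal_of_forall_eq_zero_or_one (hmeas 1) (hval 1), measureReal_def,
      hbern, ENNReal.toReal_ofReal hp.1]
  have hident (i : ℕ) : IdentDistrib (Z (i + 1)) (Z 1) μ μ := by
    rw [eq_indicator_one_of_forall_eq_zero_or_one (hval (i + 1)),
      eq_indicator_one_of_forall_eq_zero_or_one (hval 1)]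
    exact identDistrib_indicator_one (hmeas _ (measurableSet_singleton 1))
      (hmeas 1 (measurableSet_singleton 1)) (by rw [hbern, hbern])
  have hae : ∀ᵐ ω ∂μ, stopJ Z d Δ ω ≠ ⊤ := by
    filter_upwards [ae_tendsto_muhat hint (fun i j hij => hindep.indepFun hij) hident]
      with ω hω
    exact stopJ_ne_top_of_tendsto_muhat (hmean ▸ hpd) hω
  rw [← measure_univ (μ := μ)]
  exact measure_congr (ae_eq_univ.mpr (by simpa [Set.compl_ofPred] using ae_iff.mp hae))

/-- Termination of the verification algorithm for the atomic specification `p ≥ d`,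
under the well-definedness assumption `p ≠ d`: the stopping time is finite almost
surely. -/
theorem verify_terminates
    {Ω : Type*} [MeasurableSpace Ω] (μ : Measure Ω) [IsProbabilityMeasure μ]
    (p : ℝ) (hp : p ∈ Set.Icc (0 : ℝ) 1)
    (Z : ℕ → Ω → ℝ)
    (hmeas : ∀ i, Measurable (Z i))
    (hindep : iIndepFun Z μ)
    (hval : ∀ i ω, Z i ω = 0 ∨ Z i ω = 1)
    (hbern : ∀ i, μ {ω | Z i ω = 1} = ENNReal.ofReal p)
    (d : ℝ) (hpd : p ≠ d) (Δ : ℝ) (hΔ : 0 < Δ) :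
    μ {ω | stopJ Z d Δ ω ≠ ⊤} = 1 :=
  verify_terminates_general μ p hp Z hmeas hindep hval hbern d hpd Δ
end
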